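/- Every n-partite correlation P(a|x) with outcomes in Fin ℓ (i.e., any family of normalized conditional probability distributions, with no non-signaling constraint) has full-correlation functions that can be reproduced by a non-signaling n-partite correlation: there exists a non-signaling Q(a|x) with Q([∑ᵢ aᵢ]_ℓ = r | x) = P([∑ᵢ aᵢ]_ℓ = r | x) for all r ∈ Fin ℓ and all inputs x. -/

import Mathlib

/-!
Spread the law of `∑ᵢ aᵢ` under `P(·|x)` uniformly over the fibres of `a ↦ ∑ᵢ aᵢ`: the resulting
correlation `Q` has the same full-correlation functions as `P`. It is non-signaling because, for
a party `j ∉ S`, shifting `aⱼ` by `t` preserves the constraint `a|_S = b` and shifts `∑ᵢ aᵢ` by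
`t`; averaging over `t` shows that the marginal `Q(a|_S = b | x)` is a fixed multiple of
`∑ᵣ Q(∑ᵢ aᵢ = r | x) = 1`.
-/

/-- The marginal on a subset `S` of parties. -/
noncomputable def marg {I : Type*} [Fintype I] [DecidableEq I] {X A : Type*} [Fintype A]
    [DecidableEq A] (P : (I → X) → (I → A) → ℝ) (S : Finset I)
    (x : I → X) (b : I → A) : ℝ :=
  ∑ a : I → A, if ∀ j ∈ S, a j = b j then P x a else 0

/-- Non-signaling: every marginal is independent of the complementary inputs. -/
def NonSignaling {I : Type*} [Fintype I] [DecidableEq I] {X A : Type*} [Fintype A]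
    [DecidableEq A] (P : (I → X) → (I → A) → ℝ) : Prop :=
  ∀ (S : Finset I) (x x' : I → X), (∀ j ∈ S, x j = x' j) →
    ∀ b : I → A, marg P S x b = marg P S x' b

open Finset

section SumFibers

variable {ι G M : Type*} [Fintype ι] [DecidableEq ι] [AddCommGroup G] [AddCommMonoid M]

theorem sum_comp_sum_add_const {s : Finset (ι → G)} {j : ι}
    (hs : ∀ t, ∀ a ∈ s, a + Pi.single j t ∈ s) (h : G → M) (t : G) :
    ∑ a ∈ s, h (∑ i, a i + t) = ∑ a ∈ s, h (∑ i, a i) :=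
  sum_nbij' (· + Pi.single j t) (· + Pi.single j (-t)) (hs t) (hs (-t))
    (fun a _ => by simp [Pi.single_neg]) (fun a _ => by simp [Pi.single_neg])
    (fun a _ => by simp [sum_add_distrib])

variable [Fintype G]

theorem card_nsmul_sum_comp_sum {s : Finset (ι → G)} {j : ι}
    (hs : ∀ t, ∀ a ∈ s, a + Pi.single j t ∈ s) (h : G → M) :
    Fintype.card G • ∑ a ∈ s, h (∑ i, a i) = #s • ∑ r, h r :=
  calc Fintype.card G • ∑ a ∈ s, h (∑ i, a i)
      = ∑ t : G, ∑ a ∈ s, h (∑ i, a i + t) := by simp [sum_comp_sum_add_const hs]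
    _ = ∑ a ∈ s, ∑ t : G, h (∑ i, a i + t) := sum_comm
    _ = ∑ a ∈ s, ∑ r, h r := sum_congr rfl fun a _ => Equiv.sum_comp (Equiv.addLeft _) h
    _ = #s • ∑ r, h r := sum_const _

theorem card_filter_sum_eq [Nonempty ι] [DecidableEq G] (r : G) :
    #{a : ι → G | ∑ i, a i = r} = Fintype.card G ^ (Fintype.card ι - 1) := by
  obtain ⟨j⟩ := ‹Nonempty ι›
  have h := card_nsmul_sum_comp_sum (s := univ) (j := j) (fun _ _ _ => mem_univ _)
    fun g : G => if g = r then 1 else 0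
  rw [Fintype.sum_ite_eq', sum_boole, Nat.cast_id, card_univ, Fintype.card_pi, prod_const,
    card_univ, smul_eq_mul, smul_eq_mul, mul_one] at h
  refine Nat.eq_of_mul_eq_mul_left Fintype.card_pos (h.trans ?_)
  rw [← pow_succ', Nat.sub_add_cancel Fintype.card_pos]

end SumFibers

section Correlations

variable {ι X G : Type*} [Fintype ι] [DecidableEq ι] [AddCommGroup G] [Fintype G] [DecidableEq G]

/-- `fullCorr P x r` is `P([∑ᵢ aᵢ] = r | x)`. -/
noncomputable def fullCorr (P : (ι → X) → (ι → G) → ℝ) (x : ι → X) (r : G) : ℝ :=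
  ∑ a, if ∑ i, a i = r then P x a else 0

/-- The paper's `Q(a|x) = ℓ^{-(n-1)} P([∑ᵢ aᵢ] = [∑ᵢ aᵢ] | x)`: for nonempty `ι` the fibre size
is `|G| ^ (|ι| - 1)` by `card_filter_sum_eq`. -/
noncomputable def fiberUniform (P : (ι → X) → (ι → G) → ℝ) (x : ι → X) (a : ι → G) : ℝ :=
  fullCorr P x (∑ i, a i) / #{a' : ι → G | ∑ i, a' i = ∑ i, a i}

theorem fullCorr_nonneg {P : (ι → X) → (ι → G) → ℝ} {x : ι → X} (hP : ∀ a, 0 ≤ P x a) (r : G) :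
    0 ≤ fullCorr P x r :=
  sum_nonneg fun a _ => by split_ifs <;> simp [hP]

theorem sum_fullCorr (P : (ι → X) → (ι → G) → ℝ) (x : ι → X) :
    ∑ r, fullCorr P x r = ∑ a, P x a := by
  simp only [fullCorr]
  rw [sum_comm]
  simp

theorem fullCorr_comp_sum (f : (ι → X) → G → ℝ) (x : ι → X) (r : G) :
    fullCorr (fun x a => f x (∑ i, a i)) x r = #{a : ι → G | ∑ i, a i = r} * f x r := by
  rw [fullCorr, ← sum_filter, sum_congr rfl fun a ha => by rw [(mem_filter.1 ha).2], sum_const,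
    nsmul_eq_mul]

theorem fullCorr_fiberUniform (P : (ι → X) → (ι → G) → ℝ) (x : ι → X) (r : G) :
    fullCorr (fiberUniform P) x r = fullCorr P x r := by
  refine (fullCorr_comp_sum (fun x r => fullCorr P x r / #{a : ι → G | ∑ i, a i = r}) x r).trans
    ?_
  by_cases hfiber : #{a : ι → G | ∑ i, a i = r} = 0
  · rw [card_eq_zero] at hfiber
    simp [fullCorr, ← sum_filter, hfiber]
  · exact mul_div_cancel₀ _ (Nat.cast_ne_zero.2 hfiber)

theorem fiberUniform_nonneg {P : (ι → X) → (ι → G) → ℝ} {x : ι → X} (hP : ∀ a, 0 ≤ P x a)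
    (a : ι → G) : 0 ≤ fiberUniform P x a :=
  div_nonneg (fullCorr_nonneg hP _) (Nat.cast_nonneg _)

theorem sum_fiberUniform (P : (ι → X) → (ι → G) → ℝ) (x : ι → X) :
    ∑ a, fiberUniform P x a = ∑ a, P x a := by
  simp only [← sum_fullCorr, fullCorr_fiberUniform]

theorem nonSignaling_comp_sum (f : (ι → X) → G → ℝ) (hf : ∀ x x', ∑ r, f x r = ∑ r, f x' r) :
    NonSignaling fun x (a : ι → G) => f x (∑ i, a i) := by
  intro S x x' hxx' b
  by_cases hS : S = univ
  · rw [funext fun j => hxx' j (hS ▸ mem_univ j)]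
  obtain ⟨j, hj⟩ := not_forall.1 (mt eq_univ_of_forall hS)
  set s : Finset (ι → G) := {a | ∀ k ∈ S, a k = b k} with hs_def
  have hs : ∀ t, ∀ a ∈ s, a + Pi.single j t ∈ s := by
    intro t a ha
    simp only [hs_def, mem_filter, mem_univ, true_and] at ha ⊢
    intro k hk
    simp [ne_of_mem_of_not_mem hk hj, ha k hk]
  have hmarg : ∀ y, Fintype.card G • marg (fun x (a : ι → G) => f x (∑ i, a i)) S y b =
      #s • ∑ r, f y r := fun y => by
    rw [marg, ← sum_filter]
    exact card_nsmul_sum_comp_sum hs (f y)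
  exact smul_right_injective ℝ Fintype.card_ne_zero ((hmarg x).trans (by rw [hf, ← hmarg x']))

theorem nonSignaling_fiberUniform {P : (ι → X) → (ι → G) → ℝ} (hP : ∀ x, ∑ a, P x a = 1) :
    NonSignaling (fiberUniform P) := by
  rcases isEmpty_or_nonempty ι with _ | _
  · intro S x x' _ b
    rw [Subsingleton.elim x x']
  refine nonSignaling_comp_sum (fun x r => fullCorr P x r / #{a : ι → G | ∑ i, a i = r}) ?_
  intro x x'
  simp only [card_filter_sum_eq, ← sum_div, sum_fullCorr, hP]

end Correlations

theorem stmt_14_general {n ℓ : ℕ} [NeZero ℓ] {X : Type*}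
    (P : (Fin n → X) → (Fin n → Fin ℓ) → ℝ)
    (hPpos : ∀ x a, 0 ≤ P x a)
    (hPnorm : ∀ x, ∑ a, P x a = 1) :
    ∃ Q : (Fin n → X) → (Fin n → Fin ℓ) → ℝ,
      (∀ x a, 0 ≤ Q x a) ∧ (∀ x, ∑ a, Q x a = 1) ∧ NonSignaling Q ∧
      ∀ (x : Fin n → X) (r : Fin ℓ),
        (∑ a : Fin n → Fin ℓ, if (∑ i, a i) = r then Q x a else 0)
          = (∑ a : Fin n → Fin ℓ, if (∑ i, a i) = r then P x a else 0) :=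
  ⟨fiberUniform P, fun x => fiberUniform_nonneg (hPpos x),
    fun x => (sum_fiberUniform P x).trans (hPnorm x), nonSignaling_fiberUniform hPnorm,
    fullCorr_fiberUniform P⟩

/-- every `n`-partite correlation `P` (any family of normalized
conditional distributions over `(Fin ℓ)ⁿ`, with no non-signaling constraint)
has full-correlation functions that are reproduced by some non-signaling
`n`-partite correlation `Q`. -/
theorem stmt_14 {n ℓ : ℕ} (hn : 1 ≤ n) [NeZero ℓ] {X : Type*}
    (P : (Fin n → X) → (Fin n → Fin ℓ) → ℝ)
    (hPpos : ∀ x a, 0 ≤ P x a)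
    (hPnorm : ∀ x, ∑ a, P x a = 1) :
    ∃ Q : (Fin n → X) → (Fin n → Fin ℓ) → ℝ,
      (∀ x a, 0 ≤ Q x a) ∧ (∀ x, ∑ a, Q x a = 1) ∧ NonSignaling Q ∧
      ∀ (x : Fin n → X) (r : Fin ℓ),
        (∑ a : Fin n → Fin ℓ, if (∑ i, a i) = r then Q x a else 0)
          = (∑ a : Fin n → Fin ℓ, if (∑ i, a i) = r then P x a else 0) :=
  stmt_14_general P hPpos hPnorm
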